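/- In the setup described, let t, d be positive integers with 2d > 5t. Assume that every nonzero w ∈ F₂^m satisfies ‖L·w‖₀ ≥ d, and that 2·(‖B·x − y‖₀ + ‖x‖₀) > 5t for every x ∈ F₂^q. Then every nonzero z ∈ F₂^{m+1} satisfies 2·‖A·z‖₀ > 5t. -/

import Mathlib

/-!
Write `z = (w, b)` with `b` its last coordinate. If `b = 0`, the lower block of `A z` is the
codeword `L w ≠ 0`, of weight at least `d > 5t/2`. If `b = 1`, the upper block is `B x + y = B x - y`
(characteristic two), where `x` is the first `q` coordinates of `w`; since `L` is systematic and
`s'` vanishes on those coordinates, the lower block repeats `x` there. Hence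
`‖A z‖₀ ≥ ‖B x - y‖₀ + ‖x‖₀ > 5t/2`.
-/

/-- Concatenation of a prefix `x ∈ F^q` with a suffix `z ∈ F^{h-q}`, as a vector in `F^h`. -/
def concatVec {F : Type*} (q h : ℕ) (hqh : q ≤ h) (x : Fin q → F) (z : Fin (h - q) → F) :
    Fin h → F :=
  fun i => if hi : (i : ℕ) < q then x ⟨i, hi⟩
    else z ⟨(i : ℕ) - q, by have := i.isLt; omega⟩

/-- The block matrix `A = [[B, 0_{n×(m−q)}, y], [L, s']] ∈ F₂^{(n+h)×(m+1)}`. -/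
def Amat (n q m h : ℕ)
    (B : Matrix (Fin n) (Fin q) (ZMod 2)) (y : Fin n → ZMod 2)
    (L : Matrix (Fin h) (Fin m) (ZMod 2)) (s' : Fin h → ZMod 2) :
    Matrix (Fin n ⊕ Fin h) (Fin (m + 1)) (ZMod 2) :=
  Matrix.of fun i j =>
    match i with
    | Sum.inl i => if hj : (j : ℕ) < q then B i ⟨j, hj⟩
        else if (j : ℕ) < m then 0 else y i
    | Sum.inr i => if hj : (j : ℕ) < m then L i ⟨j, hj⟩ else s' i

open Function Matrix

theorem hammingNorm_sum_elim {ι κ β : Type*} [Fintype ι] [Fintype κ] [Zero β] [DecidableEq β]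
    (u : ι → β) (v : κ → β) :
    hammingNorm (Sum.elim u v) = hammingNorm u + hammingNorm v := by
  simp only [hammingNorm, ← Finset.card_disjSum]
  congr 1
  ext (i | i) <;> simp

theorem hammingNorm_comp_le_of_injective {ι κ β : Type*} [Fintype ι] [Fintype κ] [Zero β]
    [DecidableEq β] (v : κ → β) {e : ι → κ} (he : Injective e) :
    hammingNorm (v ∘ e) ≤ hammingNorm v :=
  Finset.card_le_card_of_injOn e (fun i hi => by simpa using hi) he.injOn

theorem Fin.sum_dite_lt_eq_sum {M : Type*} [AddCommMonoid M] {q m : ℕ} (hqm : q ≤ m)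
    (f : Fin q → M) :
    ∑ j : Fin m, (if hj : (j : ℕ) < q then f ⟨j, hj⟩ else 0) = ∑ j : Fin q, f j :=
  (Fintype.sum_of_injective (Fin.castLE hqm) (Fin.castLE_injective hqm) f _
    (fun j hj => dif_neg fun hjq => hj ⟨⟨j, hjq⟩, rfl⟩) (fun j => by simp)).symm

theorem concatVec_of_lt {F : Type*} {q h : ℕ} (hqh : q ≤ h) (x : Fin q → F)
    (z : Fin (h - q) → F) {i : Fin h} (hi : (i : ℕ) < q) :
    concatVec q h hqh x z i = x ⟨i, hi⟩ :=
  dif_pos hi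

theorem Amat_mulVec_snoc {n q m h : ℕ} (hqm : q ≤ m)
    (B : Matrix (Fin n) (Fin q) (ZMod 2)) (y : Fin n → ZMod 2)
    (L : Matrix (Fin h) (Fin m) (ZMod 2)) (s' : Fin h → ZMod 2) (w : Fin m → ZMod 2)
    (b : ZMod 2) :
    Amat n q m h B y L s' *ᵥ Fin.snoc w b =
      Sum.elim (B *ᵥ (w ∘ Fin.castLE hqm) + b • y) (L *ᵥ w + b • s') := by
  ext (i | i) <;>
    simp only [Matrix.mulVec, dotProduct, Fin.sum_univ_castSucc, Fin.snoc_castSucc,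
      Fin.snoc_last, Amat, Matrix.of_apply, Fin.val_castSucc, Fin.val_last, Fin.is_lt, lt_irrefl,
      dif_pos, dif_neg, not_false_eq_true, Sum.elim_inl, Sum.elim_inr, Pi.add_apply,
      Pi.smul_apply, smul_eq_mul]
  · rw [← Fin.sum_dite_lt_eq_sum hqm, dif_neg hqm.not_gt, if_neg not_false, mul_comm b]
    congr 1
    refine Finset.sum_congr rfl fun j _ => ?_
    split_ifs <;> simp [*]
  · rw [mul_comm b]

theorem hammingNorm_prefix_le_of_systematic {R : Type*} [Semiring R] [DecidableEq R]
    {q m h : ℕ} (hqm : q ≤ m) (hmh : m ≤ h) (L : Matrix (Fin h) (Fin m) R)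
    (hsys : ∀ (w : Fin m → R) (i : Fin m), L.mulVec w (Fin.castLE hmh i) = w i)
    (w : Fin m → R) (s : Fin (h - q) → R) :
    hammingNorm (w ∘ Fin.castLE hqm) ≤
      hammingNorm (L *ᵥ w + concatVec q h (hqm.trans hmh) 0 s) := by
  have hprefix : w ∘ Fin.castLE hqm =
      (L *ᵥ w + concatVec q h (hqm.trans hmh) 0 s) ∘ Fin.castLE hmh ∘ Fin.castLE hqm := by
    ext j
    have hj : (Fin.castLE hmh (Fin.castLE hqm j) : ℕ) < q := j.isLt
    simp only [Function.comp_apply, Pi.add_apply, hsys, concatVec_of_lt _ _ _ hj,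
      Pi.zero_apply, add_zero]
  rw [hprefix]
  exact hammingNorm_comp_le_of_injective _
    ((Fin.castLE_injective hmh).comp (Fin.castLE_injective hqm))

theorem stmt11 (n q m h : ℕ) (hqm : q ≤ m) (hmh : m ≤ h)
    (B : Matrix (Fin n) (Fin q) (ZMod 2)) (y : Fin n → ZMod 2)
    (L : Matrix (Fin h) (Fin m) (ZMod 2)) (s : Fin (h - q) → ZMod 2)
    (hsys : ∀ (w : Fin m → ZMod 2) (i : Fin m), L.mulVec w (Fin.castLE hmh i) = w i)
    (t d : ℕ) (htd : 5 * t < 2 * d)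
    (hL : ∀ w : Fin m → ZMod 2, w ≠ 0 → d ≤ hammingNorm (L.mulVec w))
    (hB : ∀ x : Fin q → ZMod 2,
      5 * t < 2 * (hammingNorm (B.mulVec x - y) + hammingNorm x)) :
    ∀ z : Fin (m + 1) → ZMod 2, z ≠ 0 →
      5 * t < 2 * hammingNorm
        ((Amat n q m h B y L (concatVec q h (hqm.trans hmh) 0 s)).mulVec z) := by
  intro z hz
  induction z using Fin.snocCases with | _ w b
  rw [Amat_mulVec_snoc hqm, hammingNorm_sum_elim]
  rcases (by decide : ∀ c : ZMod 2, c = 0 ∨ c = 1) b with rfl | rfl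
  · have hw : w ≠ 0 := by
      rintro rfl
      exact hz (by ext i; refine Fin.lastCases ?_ ?_ i <;> simp)
    have := hL w hw
    simp only [zero_smul, add_zero]
    omega
  · have hsub : B *ᵥ (w ∘ Fin.castLE hqm) - y = B *ᵥ (w ∘ Fin.castLE hqm) + y :=
      funext fun i => CharTwo.sub_eq_add _ _
    have := hB (w ∘ Fin.castLE hqm)
    have := hammingNorm_prefix_le_of_systematic hqm hmh L hsys w s
    rw [one_smul, one_smul, ← hsub]
    omega
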